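/- arXiv:1308.1491 — 2 statements merged into one kernel-verified Lean document; each statement's English description precedes it below -/
import Mathlib

section
/- For every real z and all real t, s with |t-s| > 0 and every α > 0, one has |e^{itz} - e^{isz}| = 2|sin(z(t-s)/2)| ≤ 2 (ln(e^α + |z|/2) / ln(e^α + 1/|t-s|))^α. -/
open Real Complex

/-! Write `L c = log (exp α + c)`, `a = |z| / 2` and `b = 1 / |t - s|`, so that
`|sin (z (t - s) / 2)| ≤ min 1 (a / b)`. If `b ≤ a`, then `L b ≤ L a` gives `1 ≤ (L a / L b) ^ α`.
If `a ≤ b`, then `L a ≥ α` and `log u ≤ u - 1` give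
`α log (L b / L a) ≤ α (L b - L a) / L a ≤ L b - L a ≤ log (b / a)`, i.e. `a / b ≤ (L a / L b) ^ α`. -/

theorem norm_exp_I_mul_ofReal_sub_exp_I_mul_ofReal (x y : ℝ) :
    ‖exp (I * x) - exp (I * y)‖ = 2 * |Real.sin ((x - y) / 2)| := by
  have hfactor : exp (I * x) - exp (I * y) = exp (I * y) * (exp (I * ↑(x - y)) - 1) := by
    rw [mul_sub, mul_one, ← Complex.exp_add]; push_cast; ring_nf
  rw [hfactor, norm_mul, norm_exp_I_mul_ofReal, one_mul, norm_exp_I_mul_ofReal_sub_one,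
    Real.norm_eq_abs, abs_mul, abs_two]

section LogRatio

variable {α a b : ℝ}

theorem le_log_exp_add (ha : 0 ≤ a) : α ≤ Real.log (Real.exp α + a) := by
  rw [Real.le_log_iff_exp_le (by positivity)]
  linarith

theorem log_exp_add_sub_log_exp_add_le (ha : 0 < a) (hab : a ≤ b) :
    Real.log (Real.exp α + b) - Real.log (Real.exp α + a) ≤ Real.log (b / a) := by
  have hexp := Real.exp_pos α
  have hb : 0 < b := ha.trans_le hab
  rw [← Real.log_div (by positivity) (by positivity)]
  refine Real.log_le_log (by positivity) ?_
  rw [div_le_div_iff₀ (by positivity) ha]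
  nlinarith

theorem div_le_log_exp_add_div_rpow (hα : 0 < α) (ha : 0 ≤ a) (hab : a ≤ b) (hb : 0 < b) :
    a / b ≤ (Real.log (Real.exp α + a) / Real.log (Real.exp α + b)) ^ α := by
  set La := Real.log (Real.exp α + a)
  set Lb := Real.log (Real.exp α + b)
  rcases ha.eq_or_lt with rfl | ha
  · rw [zero_div]; exact Real.rpow_nonneg (div_nonneg (hα.le.trans (le_log_exp_add le_rfl))
      (hα.le.trans (le_log_exp_add hb.le))) α
  have hαLa : α ≤ La := le_log_exp_add ha.le
  have hLa : 0 < La := hα.trans_le hαLa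
  have hLab : La ≤ Lb := Real.log_le_log (by positivity) (by linarith)
  have hLb : 0 < Lb := hLa.trans_le hLab
  have hlog : α * Real.log (Lb / La) ≤ Real.log (b / a) :=
    calc α * Real.log (Lb / La) ≤ α * (Lb / La - 1) := by
          gcongr; exact Real.log_le_sub_one_of_pos (by positivity)
      _ = α / La * (Lb - La) := by field_simp
      _ ≤ 1 * (Lb - La) := by gcongr; exact (div_le_one hLa).2 hαLa
      _ ≤ Real.log (b / a) := by rw [one_mul]; exact log_exp_add_sub_log_exp_add_le ha hab
  rw [Real.log_div hLb.ne' hLa.ne', Real.log_div hb.ne' ha.ne'] at hlog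
  calc a / b = Real.exp (Real.log (a / b)) := (Real.exp_log (by positivity)).symm
    _ ≤ Real.exp (Real.log (La / Lb) * α) := by
        rw [Real.log_div ha.ne' hb.ne', Real.log_div hLa.ne' hLb.ne']
        gcongr; linarith
    _ = (La / Lb) ^ α := (Real.rpow_def_of_pos (by positivity) α).symm

theorem one_le_log_exp_add_div_rpow (hα : 0 < α) (hb : 0 ≤ b) (hba : b ≤ a) :
    1 ≤ (Real.log (Real.exp α + a) / Real.log (Real.exp α + b)) ^ α := by
  have hLb : 0 < Real.log (Real.exp α + b) := hα.trans_le (le_log_exp_add hb)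
  refine Real.one_le_rpow ((one_le_div hLb).2 ?_) hα.le
  exact Real.log_le_log (by positivity) (by linarith)

theorem min_one_div_le_log_exp_add_div_rpow (hα : 0 < α) (ha : 0 ≤ a) (hb : 0 < b) :
    min 1 (a / b) ≤ (Real.log (Real.exp α + a) / Real.log (Real.exp α + b)) ^ α := by
  rcases le_total b a with hba | hab
  · exact (min_le_left _ _).trans (one_le_log_exp_add_div_rpow hα hb.le hba)
  · exact (min_le_right _ _).trans (div_le_log_exp_add_div_rpow hα ha hab hb)

end LogRatio

theorem stmt0 (z t s : ℝ) (hts : |t - s| > 0) (α : ℝ) (hα : α > 0) :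
    ‖Complex.exp (Complex.I * t * z) - Complex.exp (Complex.I * s * z)‖
      = 2 * |Real.sin (z * (t - s) / 2)| ∧
    2 * |Real.sin (z * (t - s) / 2)|
      ≤ 2 * (Real.log (Real.exp α + |z| / 2) / Real.log (Real.exp α + 1 / |t - s|)) ^ α := by
  refine ⟨?_, ?_⟩
  · rw [mul_assoc, mul_assoc, ← ofReal_mul, ← ofReal_mul,
      norm_exp_I_mul_ofReal_sub_exp_I_mul_ofReal, ← sub_mul, mul_comm (t - s)]
  · have hsin : |Real.sin (z * (t - s) / 2)| ≤ min 1 ((|z| / 2) / (1 / |t - s|)) := by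
      refine le_min (Real.abs_sin_le_one _) (Real.abs_sin_le_abs.trans_eq ?_)
      rw [abs_div, abs_mul, abs_two]
      field_simp
    have hbound := min_one_div_le_log_exp_add_div_rpow hα (by positivity : 0 ≤ |z| / 2)
      (by positivity : 0 < 1 / |t - s|)
    linarith
end

section
/- Let α > 1/2, c > 0, T > 0, ε₀ > 0, and let σ(ε) = c/(ln(e^α + 1/ε))^α. Set γ = min(ε₀, σ(T/2)). Then (1/√2) ∫_0^γ (ln(T/(2σ^{(-1)}(ε)) + 1))^{1/2} dε ≤ (γ/√2)(√(ln(T+1)) + (1 - 1/(2α))^{-1} (c/γ)^{1/(2α)}), where σ^{(-1)}(t) = 1/(e^{(c/t)^{1/α}} - e^α). -/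
/-!
Where `ε ≤ σ(T/2)`, the quantity `D = e^{(c/ε)^{1/α}} - e^α = 1/σ⁻¹(ε)` is at least `2/T`, so
`T·D/2 ≥ 1` and `log (T·D/2 + 1) ≤ log (T·D) ≤ log (T + 1) + (c/ε)^{1/α}`.  By subadditivity of `√`
the integrand is then at most `√(log (T + 1)) + (c/ε)^{1/(2α)}`, and `1/(2α) < 1` makes the second
term integrable at `0`, with `∫₀^γ (c/ε)^p dε = γ (1 - p)⁻¹ (c/γ)^p`.
-/

open Real MeasureTheory intervalIntegral Set

lemma Real.sqrt_add_le_add_sqrt {a b : ℝ} (ha : 0 ≤ a) (hb : 0 ≤ b) : √(a + b) ≤ √a + √b := by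
  rw [sqrt_le_left (by positivity)]
  nlinarith [sq_sqrt ha, sq_sqrt hb, sqrt_nonneg a, sqrt_nonneg b]

lemma Real.log_mul_div_two_add_one_le {T D : ℝ} (hT : 0 < T) (hD : 2 / T ≤ D) :
    log (T * D / 2 + 1) ≤ log (T + 1) + log D := by
  have hTD : 2 ≤ T * D := (div_le_iff₀' hT).mp hD
  have hD0 : 0 < D := (by positivity : (0 : ℝ) < 2 / T).trans_le hD
  calc log (T * D / 2 + 1) ≤ log (T * D) := log_le_log (by positivity) (by linarith)
    _ = log T + log D := log_mul hT.ne' hD0.ne'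
    _ ≤ log (T + 1) + log D := by gcongr; linarith

lemma Real.div_rpow_eq_mul_rpow_neg {c ε : ℝ} (hc : 0 ≤ c) (hε : 0 ≤ ε) (p : ℝ) :
    (c / ε) ^ p = c ^ p * ε ^ (-p) := by
  rw [div_rpow hc hε, rpow_neg hε, div_eq_mul_inv]

lemma intervalIntegrable_div_rpow {c γ p : ℝ} (hc : 0 ≤ c) (hγ : 0 ≤ γ) (hp : p < 1) :
    IntervalIntegrable (fun ε ↦ (c / ε) ^ p) volume 0 γ := by
  refine ((intervalIntegral.intervalIntegrable_rpow' (r := -p) (by linarith)).const_mul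
    (c ^ p)).congr fun ε hε ↦ ?_
  rw [uIoc_of_le hγ] at hε
  exact (div_rpow_eq_mul_rpow_neg hc hε.1.le p).symm

lemma integral_div_rpow {c γ p : ℝ} (hc : 0 ≤ c) (hγ : 0 < γ) (hp : p < 1) :
    ∫ ε in (0 : ℝ)..γ, (c / ε) ^ p = γ * (1 - p)⁻¹ * (c / γ) ^ p := by
  have hEq : EqOn (fun ε ↦ (c / ε) ^ p) (fun ε ↦ c ^ p * ε ^ (-p)) (uIcc 0 γ) := fun ε hε ↦ by
    rw [uIcc_of_le hγ.le] at hε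
    exact div_rpow_eq_mul_rpow_neg hc hε.1 p
  rw [integral_congr hEq, intervalIntegral.integral_const_mul,
    integral_rpow (Or.inl (by linarith)), zero_rpow (by linarith), sub_zero, div_rpow hc hγ.le,
    neg_add_eq_sub, rpow_sub hγ, rpow_one]
  field_simp

lemma intervalIntegral.integral_mono_on_Ioc_of_nonneg {f g : ℝ → ℝ} {a b : ℝ} (hab : a ≤ b)
    (hf : ∀ x ∈ Ioc a b, 0 ≤ f x) (hg : IntervalIntegrable g volume a b)
    (hfg : ∀ x ∈ Ioc a b, f x ≤ g x) : ∫ x in a..b, f x ≤ ∫ x in a..b, g x := by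
  rw [integral_of_le hab, integral_of_le hab]
  exact integral_mono_of_nonneg (ae_restrict_of_forall_mem measurableSet_Ioc hf) hg.1
    (ae_restrict_of_forall_mem measurableSet_Ioc hfg)

lemma sqrt_log_entropy_integrand_le {α c T ε : ℝ} (hα : 0 < α) (hc : 0 ≤ c) (hT : 0 < T)
    (hε : 0 < ε) (hεσ : ε ≤ c / log (exp α + 1 / (T / 2)) ^ α) :
    √(log (T / (2 * (1 / (exp ((c / ε) ^ (1 / α)) - exp α))) + 1))
      ≤ √(log (T + 1)) + (c / ε) ^ (1 / (2 * α)) := by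
  have hL : 0 < log (exp α + 2 / T) :=
    log_pos (by linarith [one_lt_exp_iff.mpr hα, (by positivity : (0 : ℝ) < 2 / T)])
  rw [one_div_div] at hεσ
  have hLx : log (exp α + 2 / T) ≤ (c / ε) ^ (1 / α) := by
    rw [one_div, le_rpow_inv_iff_of_pos hL.le (by positivity) hα]
    exact (le_div_comm₀ hε (by positivity)).mp hεσ
  set x := (c / ε) ^ (1 / α)
  have hD : 2 / T ≤ exp x - exp α := by
    linarith [(log_le_iff_le_exp (by positivity)).mp hLx]
  have hDx : log (exp x - exp α) ≤ x :=
    (log_le_log (by linarith [(by positivity : (0 : ℝ) < 2 / T)]) (by linarith [exp_pos α])).trans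
      (log_exp x).le
  calc √(log (T / (2 * (1 / (exp x - exp α))) + 1))
      = √(log (T * (exp x - exp α) / 2 + 1)) := by rw [mul_one_div, div_div_eq_mul_div]
    _ ≤ √(log (T + 1) + x) := by
        gcongr; linarith [log_mul_div_two_add_one_le hT hD]
    _ ≤ √(log (T + 1)) + √x := sqrt_add_le_add_sqrt (log_nonneg (by linarith)) (by positivity)
    _ = √(log (T + 1)) + (c / ε) ^ (1 / (2 * α)) := by
        rw [sqrt_eq_rpow x, ← rpow_mul (by positivity)]
        field_simp

theorem stmt19 (α c T ε₀ : ℝ) (hα : 1 / 2 < α) (hc : 0 < c) (hT : 0 < T) (hε₀ : 0 < ε₀)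
    (γ : ℝ) (hγ : γ = min ε₀ (c / (Real.log (Real.exp α + 1 / (T / 2))) ^ α)) :
    (1 / Real.sqrt 2) *
        ∫ ε in (0:ℝ)..γ,
          Real.sqrt (Real.log (T / (2 * (1 / (Real.exp ((c / ε) ^ (1 / α)) - Real.exp α))) + 1))
      ≤ (γ / Real.sqrt 2) *
          (Real.sqrt (Real.log (T + 1)) + (1 - 1 / (2 * α))⁻¹ * (c / γ) ^ (1 / (2 * α))) := by
  have hα0 : 0 < α := by linarith
  have hp : 1 / (2 * α) < 1 := by rw [div_lt_one (by linarith)]; linarith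
  have hL : 0 < log (exp α + 1 / (T / 2)) :=
    log_pos (by linarith [one_lt_exp_iff.mpr hα0, (by positivity : (0 : ℝ) < 1 / (T / 2))])
  have hγ0 : 0 < γ := hγ ▸ lt_min hε₀ (by positivity)
  have hγσ : γ ≤ c / log (exp α + 1 / (T / 2)) ^ α := hγ ▸ min_le_right _ _
  have hint := intervalIntegrable_div_rpow hc.le hγ0.le hp
  calc _ ≤ (1 / √2) * ∫ ε in (0 : ℝ)..γ, (√(log (T + 1)) + (c / ε) ^ (1 / (2 * α))) := by
        gcongr
        exact integral_mono_on_Ioc_of_nonneg hγ0.le (fun _ _ ↦ sqrt_nonneg _)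
          (intervalIntegrable_const.add hint)
          fun ε hε ↦ sqrt_log_entropy_integrand_le hα0 hc.le hT hε.1 (hε.2.trans hγσ)
    _ = _ := by
        rw [integral_add intervalIntegrable_const hint, intervalIntegral.integral_const,
          smul_eq_mul, integral_div_rpow hc.le hγ0 hp]
        ring
end
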